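/- Let T be a quiver, α₀ : p → q an arrow of T such that the vertex q is incident to no arrow of T other than α₀, and let T' be the quiver obtained from T by removing q and α₀. Let M be a representation of T over a field K with ordered basis B such that every element of B ∖ B_q precedes every element of B_q and the matrix of M_{α₀} with respect to the ordered bases B_p and B_q is the identity matrix. Let M' be the restriction of M to T', β ⊆ B with M_{α₀}(β_p) ⊆ β_q, and β' = β ∖ β_q. Then there is a bijection C_β^M ≅ C_{β'}^{M'} × K^n whose first component is the restriction map V ↦ (V_r)_{r∈T'0}, where n = Σ_{b ∈ β_q ∖ M_{α₀}(β_p)} #{b' ∈ B_q : b' < b and b' ∉ β_q}. -/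

import Mathlib

open scoped Classical

noncomputable section

namespace QGr

/-- A representation of the quiver with vertex set `V0` and arrow set `A`
(source and target maps are part of the data), given in coordinates with respect to
an ordered basis `B`: the basis element `b : B` sits at the vertex `vtx b`, the space
at the vertex `p` is `{b : B // vtx b = p} → K`, and `mmap a` is the map attached to
the arrow `a`. -/
structure Rep (K : Type) [Field K] (V0 A B : Type) where
  src : A → V0
  tgt : A → V0
  vtx : B → V0
  mmap : ∀ a : A, ({b : B // vtx b = src a} → K) → ({b : B // vtx b = tgt a} → K)

namespace Rep

variable {K : Type} [Field K] {V0 A B : Type}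

/-- A collection of subspaces, one at each vertex. -/
def SubRep (R : Rep K V0 A B) : Type :=
  ∀ p : V0, Submodule K ({b : B // R.vtx b = p} → K)

/-- The collection `W` is a subrepresentation. -/
def IsSubrep (R : Rep K V0 A B) (W : R.SubRep) : Prop :=
  ∀ a : A, ∀ x ∈ W (R.src a), R.mmap a x ∈ W (R.tgt a)

/-- All structure maps are `K`-linear. -/
def Linear (R : Rep K V0 A B) : Prop := ∀ a : A, IsLinearMap K (R.mmap a)

/-- Membership in the Schubert cell attached to `β ⊆ B`: each `W p` is spanned by vectors
`v b₀ = b₀ + ∑ λ_{b',b₀} b'` (`b₀ ∈ β ∩ B_p`), the sum over `b' < b₀` with `b' ∉ β`. -/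
def InCell [LinearOrder B] (R : Rep K V0 A B) (β : Finset B) (W : R.SubRep) : Prop :=
  ∀ p : V0, ∃ v : {b : B // b ∈ β ∧ R.vtx b = p} → ({b : B // R.vtx b = p} → K),
    (∀ b0, v b0 ⟨b0.val, b0.prop.2⟩ = 1) ∧
    (∀ b0 b1, b1.val ≠ b0.val → ¬(b1.val < b0.val ∧ b1.val ∉ β) → v b0 b1 = 0) ∧
    W p = Submodule.span K (Set.range v)

/-- The Schubert cell `C_β^M`. -/
def Cell [LinearOrder B] (R : Rep K V0 A B) (β : Finset B) : Set R.SubRep :=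
  {W | R.IsSubrep W ∧
    (∀ p : V0, Module.finrank K (W p) = (β.filter fun b => R.vtx b = p).card) ∧
    R.InCell β W}

/-- The quiver Grassmannian `Gr_e(M)`. -/
def Gr (R : Rep K V0 A B) (e : V0 → ℕ) : Set R.SubRep :=
  {W | R.IsSubrep W ∧ ∀ p : V0, Module.finrank K (W p) = e p}

/-- Collections of subspaces indexed by the vertices in `S0`. -/
def SubRepOn (R : Rep K V0 A B) (S0 : Set V0) : Type :=
  ∀ p : {p : V0 // p ∈ S0}, Submodule K ({b : B // R.vtx b = ↑p} → K)

/-- Subrepresentation condition over the subquiver `(S0, S1)`. -/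
def IsSubrepOn (R : Rep K V0 A B) (S0 : Set V0) (S1 : Set A) (W : R.SubRepOn S0) : Prop :=
  ∀ a : A, a ∈ S1 → ∀ (h1 : R.src a ∈ S0) (h2 : R.tgt a ∈ S0),
    ∀ x ∈ W ⟨R.src a, h1⟩, R.mmap a x ∈ W ⟨R.tgt a, h2⟩

/-- Cell membership over the vertices in `S0`. -/
def InCellOn [LinearOrder B] (R : Rep K V0 A B) (S0 : Set V0) (β : Finset B)
    (W : R.SubRepOn S0) : Prop :=
  ∀ p : {p : V0 // p ∈ S0},
    ∃ v : {b : B // b ∈ β ∧ R.vtx b = ↑p} → ({b : B // R.vtx b = ↑p} → K),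
      (∀ b0, v b0 ⟨b0.val, b0.prop.2⟩ = 1) ∧
      (∀ b0 b1, b1.val ≠ b0.val → ¬(b1.val < b0.val ∧ b1.val ∉ β) → v b0 b1 = 0) ∧
      W p = Submodule.span K (Set.range v)

/-- The Schubert cell of the restriction of the representation to the subquiver `(S0, S1)`. -/
def CellOn [LinearOrder B] (R : Rep K V0 A B) (S0 : Set V0) (S1 : Set A) (β : Finset B) :
    Set (R.SubRepOn S0) :=
  {W | R.IsSubrepOn S0 S1 W ∧
    (∀ p : {p : V0 // p ∈ S0},
      Module.finrank K (W p) = (β.filter fun b => R.vtx b = ↑p).card) ∧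
    R.InCellOn S0 β W}

/-- The quiver Grassmannian of the restriction to the subquiver `(S0, S1)`. -/
def GrOn (R : Rep K V0 A B) (S0 : Set V0) (S1 : Set A) (e : V0 → ℕ) :
    Set (R.SubRepOn S0) :=
  {W | R.IsSubrepOn S0 S1 W ∧ ∀ p : {p : V0 // p ∈ S0}, Module.finrank K (W p) = e ↑p}

/-- Restriction of a collection of subspaces to the vertices in `S0`. -/
def resOn (R : Rep K V0 A B) (S0 : Set V0) (W : R.SubRep) : R.SubRepOn S0 :=
  fun p => W ↑p

/-- `p < q` for vertices: every basis element at `p` precedes every basis element at `q`. -/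
def vlt [LT B] (R : Rep K V0 A B) (p q : V0) : Prop :=
  ∀ b b' : B, R.vtx b = p → R.vtx b' = q → b < b'

def vle [LT B] (R : Rep K V0 A B) (p q : V0) : Prop := p = q ∨ R.vlt p q

/-- The matrix of `mmap a` with respect to the ordered bases at source and target is a
(square) identity matrix. -/
def IsIdMat [LinearOrder B] (R : Rep K V0 A B) (a : A) : Prop :=
  ∃ e : {b : B // R.vtx b = R.src a} ≃o {b : B // R.vtx b = R.tgt a},
    ∀ i, R.mmap a (Pi.single i 1) = Pi.single (e i) 1

/-- `mmap a` sends the basis vector `b0` to the basis vector `b1`. -/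
def MapsBasisTo (R : Rep K V0 A B) (a : A) (b0 b1 : B) : Prop :=
  ∃ (h0 : R.vtx b0 = R.src a) (h1 : R.vtx b1 = R.tgt a),
    R.mmap a (Pi.single ⟨b0, h0⟩ 1) = Pi.single ⟨b1, h1⟩ 1

/-- The ordered basis `B` is ordered above the subquiver `(S0, S1)`. -/
def OrderedAbove [LinearOrder B] (R : Rep K V0 A B) (S0 : Set V0) (S1 : Set A) : Prop :=
  (∀ b b' : B, R.vtx b ∈ S0 → R.vtx b' ∉ S0 → b < b') ∧
  (∀ p q : V0, p ≠ q → R.vlt p q ∨ R.vlt q p) ∧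
  (∀ (r : ℕ) (pa : Fin (r+1) → V0), pa 0 ∈ S0 → (∀ i, i ≠ 0 → pa i ∉ S0) →
    Function.Injective pa →
    (∀ i : Fin r, ∃ a : A, (R.src a = pa i.castSucc ∧ R.tgt a = pa i.succ) ∨
      (R.src a = pa i.succ ∧ R.tgt a = pa i.castSucc)) →
    ∀ i : Fin r, R.vlt (pa i.castSucc) (pa i.succ)) ∧
  (∀ a : A, a ∉ S1 → R.IsIdMat a)

end Rep

/-- The relation on the vertices of the subquiver with vertex set `T0` identifying all
vertices of `S0` with each other. -/
def treeRel {V0 : Type} (S0 T0 : Set V0) :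
    {v : V0 // v ∈ T0} → {v : V0 // v ∈ T0} → Prop :=
  fun x y => (↑x ∈ S0 ∧ ↑y ∈ S0)

/-- The subquiver `(T0, T1)` is a tree extension of the subquiver `(S0, S1)`:
the quotient quiver `T/S` (arrows of `T` not in `S`; vertices of `T` with all vertices of `S`
identified) is a tree, i.e. it is connected (as an undirected graph) and the number of its
edges is one less than the number of its vertices. -/
def IsTreeExtensionIn {V0 A : Type} (src tgt : A → V0) (T0 : Set V0) (T1 : Set A)
    (S0 : Set V0) (S1 : Set A) : Prop :=
  (∀ u v : Quot (treeRel S0 T0), Relation.ReflTransGen (fun u v =>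
      ∃ a : A, a ∈ T1 ∧ a ∉ S1 ∧ ∃ (hs : src a ∈ T0) (ht : tgt a ∈ T0),
        (Quot.mk (treeRel S0 T0) ⟨src a, hs⟩ = u ∧ Quot.mk (treeRel S0 T0) ⟨tgt a, ht⟩ = v) ∨
        (Quot.mk (treeRel S0 T0) ⟨src a, hs⟩ = v ∧ Quot.mk (treeRel S0 T0) ⟨tgt a, ht⟩ = u))
      u v) ∧
  Nat.card {a : A // a ∈ T1 ∧ a ∉ S1} + 1 = Nat.card (Quot (treeRel S0 T0))

/-- `T` (the full ambient quiver) is a tree extension of the subquiver `(S0, S1)`. -/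
def IsTreeExtension {V0 A : Type} (src tgt : A → V0) (S0 : Set V0) (S1 : Set A) : Prop :=
  IsTreeExtensionIn src tgt Set.univ Set.univ S0 S1

namespace Rep

variable {K : Type} [Field K] {V0 A B QV QA : Type}

/-- The structure map of the push-forward representation `F_*M` attached to the arrow `aq`
of the target quiver. -/
def pushMap [Fintype A] (R : Rep K V0 A B) (qsrc qtgt : QA → QV) (Fv : V0 → QV)
    (Fa : A → QA) (hFs : ∀ a : A, Fv (R.src a) = qsrc (Fa a)) (aq : QA)
    (x : {b : B // Fv (R.vtx b) = qsrc aq} → K) (c : {b : B // Fv (R.vtx b) = qtgt aq}) : K :=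
  ∑ α : A, if hα : Fa α = aq then
    (if hc : R.vtx c.val = R.tgt α then
      R.mmap α (fun b => x ⟨b.val, by rw [b.prop, hFs α, hα]⟩) ⟨c.val, hc⟩
    else 0) else 0

/-- The push-forward representation `F_*M` along the quiver morphism `F = (Fv, Fa)`. -/
def push [Fintype A] (R : Rep K V0 A B) (qsrc qtgt : QA → QV) (Fv : V0 → QV)
    (Fa : A → QA) (hFs : ∀ a : A, Fv (R.src a) = qsrc (Fa a)) : Rep K QV QA B where
  src := qsrc
  tgt := qtgt
  vtx := fun b => Fv (R.vtx b)
  mmap := R.pushMap qsrc qtgt Fv Fa hFs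

/-- The push-forward `F_*V` of a collection of subspaces: at the vertex `q` of `Q` it consists
of all vectors whose component in each `M_p` with `Fv p = q` lies in `V_p`. -/
def pushSub (R : Rep K V0 A B) (Fv : V0 → QV) (W : R.SubRep) :
    ∀ q : QV, Submodule K ({b : B // Fv (R.vtx b) = q} → K) := fun q =>
  { carrier := {x | ∀ (p : V0) (hq : Fv p = q),
      (fun b : {b : B // R.vtx b = p} =>
        x ⟨b.val, by rw [b.prop]; exact hq⟩) ∈ W p}
    add_mem' := fun hx hy p hq => (W p).add_mem (hx p hq) (hy p hq)
    zero_mem' := fun p hq => (W p).zero_mem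
    smul_mem' := fun c x hx p hq => (W p).smul_mem c (hx p hq) }

/-- `reach n p` : there is an (undirected) walk of length `n` from `p` into `S0`. -/
def reach (R : Rep K V0 A B) (S0 : Set V0) : ℕ → V0 → Prop
  | 0, p => p ∈ S0
  | (n+1), p => ∃ a : A, (R.src a = p ∧ R.reach S0 n (R.tgt a)) ∨
      (R.tgt a = p ∧ R.reach S0 n (R.src a))

/-- The graph distance from `p` to the vertex set `S0`. -/
def distS (R : Rep K V0 A B) (S0 : Set V0) (p : V0) : ℕ :=
  sInf {n : ℕ | R.reach S0 n p}

/-- The fibre length `ε(p,p')` of a pair of vertices. -/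
def eps [LT B] (R : Rep K V0 A B) (Fv : V0 → QV) (p p' : V0) : ℕ :=
  Set.ncard {p'' : V0 | Fv p'' = Fv p ∧ R.vle p p'' ∧ R.vlt p'' p'}

/-- Lexicographic comparison `Ψ(p,p') < Ψ(q,q')`. -/
def psiLt [LT B] (R : Rep K V0 A B) (S0 : Set V0) (Fv : V0 → QV) (p p' q q' : V0) : Prop :=
  R.eps Fv p p' < R.eps Fv q q' ∨ (R.eps Fv p p' = R.eps Fv q q' ∧
    (max (R.distS S0 p) (R.distS S0 p') < max (R.distS S0 q) (R.distS S0 q') ∨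
     (max (R.distS S0 p) (R.distS S0 p') = max (R.distS S0 q) (R.distS S0 q') ∧
       R.vlt p' q')))

def type0 [LT B] (R : Rep K V0 A B) (Fa : A → QA) (aq : QA) (t s : V0) : Prop :=
  ¬ ∃ α : A, Fa α = aq ∧ R.vle (R.src α) s ∧ R.vle t (R.tgt α)

def type1 (R : Rep K V0 A B) (Fa : A → QA) (aq : QA) (t s : V0) : Prop :=
  ∃ α : A, Fa α = aq ∧ R.src α = s ∧ R.tgt α = t

def type2a [LT B] (R : Rep K V0 A B) (S0 : Set V0) (Fv : V0 → QV) (Fa : A → QA)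
    (aq : QA) (t s : V0) : Prop :=
  ∃ α' α'' : A, Fa α' = aq ∧ Fa α'' = aq ∧ R.tgt α' = t ∧ R.vlt (R.src α') s ∧
    R.src α'' = s ∧ R.vlt (R.tgt α'') t ∧ R.psiLt S0 Fv t (R.tgt α'') (R.src α') s

def type2b [LT B] (R : Rep K V0 A B) (S0 : Set V0) (Fv : V0 → QV) (Fa : A → QA)
    (aq : QA) (t s : V0) : Prop :=
  ∃ α' α'' : A, Fa α' = aq ∧ Fa α'' = aq ∧ R.tgt α' = t ∧ R.vlt (R.src α') s ∧
    R.src α'' = s ∧ R.vlt (R.tgt α'') t ∧ R.psiLt S0 Fv (R.src α') s t (R.tgt α'')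

def type3a [LT B] (R : Rep K V0 A B) (S0 : Set V0) (Fv : V0 → QV) (Fa : A → QA)
    (aq : QA) (t s : V0) : Prop :=
  ∃ α'' : A, Fa α'' = aq ∧ R.src α'' = s ∧ R.vlt t (R.tgt α'') ∧
    (¬ ∃ α : A, Fa α = aq ∧ R.tgt α = t) ∧
    ∀ α : A, Fa α = aq → R.vlt t (R.tgt α) → R.vlt (R.tgt α) (R.tgt α'') →
      R.psiLt S0 Fv (R.src α) s t (R.tgt α'')

def type4a [LT B] (R : Rep K V0 A B) (S0 : Set V0) (Fv : V0 → QV) (Fa : A → QA)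
    (aq : QA) (t s : V0) : Prop :=
  ∃ α' : A, Fa α' = aq ∧ R.tgt α' = t ∧ R.vlt (R.src α') s ∧
    (¬ ∃ α : A, Fa α = aq ∧ R.src α = s) ∧
    ∀ α : A, Fa α = aq → R.vlt (R.src α') (R.src α) → R.vlt (R.src α) s →
      R.psiLt S0 Fv t (R.tgt α) (R.src α') s

/-- `F` is strictly ordered with respect to the ordered basis. -/
def StrictlyOrdered [LT B] (R : Rep K V0 A B) (Fa : A → QA) : Prop :=
  ∀ α α' : A, α ≠ α' → Fa α = Fa α' →
    (R.vlt (R.src α) (R.src α') ∧ R.vlt (R.tgt α) (R.tgt α')) ∨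
    (R.vlt (R.src α') (R.src α) ∧ R.vlt (R.tgt α') (R.tgt α))

/-- The pair `(p, p')` is a relevant pair. -/
def relPair [LT B] (R : Rep K V0 A B) (S0 : Set V0) (Fv : V0 → QV) (p p' : V0) : Prop :=
  Fv p = Fv p' ∧ R.vle p p' ∧ p' ∉ S0

/-- Condition of Hypothesis (H) on outgoing arrows at the relevant pair `(p, p')`. -/
def outOK [LT B] (R : Rep K V0 A B) (S0 : Set V0) (Fv : V0 → QV) (Fa : A → QA)
    (qsrc qtgt : QA → QV) (p p' : V0) (aq : QA) : Prop :=
  qsrc aq = Fv p →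
    ((¬ ∃ α : A, Fa α = aq ∧ R.src α = p') →
      ∀ q : V0, Fv q = qtgt aq → R.type0 Fa aq q p') ∧
    ((∃ α : A, Fa α = aq ∧ R.src α = p') →
      ∃ α : A, Fa α = aq ∧ R.src α = p ∧
        (R.type1 Fa aq (R.tgt α) p' ∨ R.type2b S0 Fv Fa aq (R.tgt α) p'))

/-- Condition of Hypothesis (H) on incoming arrows at the relevant pair `(p, p')`. -/
def inOK [LT B] (R : Rep K V0 A B) (S0 : Set V0) (Fv : V0 → QV) (Fa : A → QA)
    (qsrc qtgt : QA → QV) (p p' : V0) (aq : QA) : Prop :=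
  qtgt aq = Fv p →
    ((¬ ∃ α : A, Fa α = aq ∧ R.tgt α = p) →
      ∀ q' : V0, Fv q' = qsrc aq → R.type0 Fa aq p q') ∧
    ((∃ α : A, Fa α = aq ∧ R.tgt α = p) →
      ∃ α : A, Fa α = aq ∧ R.tgt α = p' ∧
        (R.type1 Fa aq p (R.src α) ∨ R.type2a S0 Fv Fa aq p (R.src α)))

/-- Exceptional situation (1) of Hypothesis (H). -/
def exc1 [LinearOrder B] (R : Rep K V0 A B) (S0 : Set V0) (S1 : Set A) (Fv : V0 → QV)
    (Fa : A → QA) (qsrc : QA → QV) (p p' : V0) (aq : QA) : Prop :=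
  qsrc aq = Fv p ∧ ∃ α : A, Fa α = aq ∧ R.src α = p ∧
    (R.type2a S0 Fv Fa aq (R.tgt α) p' ∨ R.type4a S0 Fv Fa aq (R.tgt α) p') ∧
    (α ∈ S1 → R.IsIdMat α)

/-- Exceptional situation (2) of Hypothesis (H). -/
def exc2 [LT B] (R : Rep K V0 A B) (S0 : Set V0) (Fv : V0 → QV) (Fa : A → QA)
    (qtgt : QA → QV) (p p' : V0) (aq : QA) : Prop :=
  qtgt aq = Fv p ∧ ∃ α : A, Fa α = aq ∧ R.tgt α = p' ∧
    (R.type2b S0 Fv Fa aq p (R.src α) ∨ R.type3a S0 Fv Fa aq p (R.src α))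

/-- Hypothesis (H). -/
def HypH [LinearOrder B] (R : Rep K V0 A B) (S0 : Set V0) (S1 : Set A)
    (qsrc qtgt : QA → QV) (Fv : V0 → QV) (Fa : A → QA) : Prop :=
  R.StrictlyOrdered Fa ∧
  ∀ p p' : V0, R.relPair S0 Fv p p' →
    ((∀ aq : QA, R.outOK S0 Fv Fa qsrc qtgt p p' aq ∧ R.inOK S0 Fv Fa qsrc qtgt p p' aq) ∨
     (∃ aq0 : QA,
        (R.exc1 S0 S1 Fv Fa qsrc p p' aq0 ∨ R.exc2 S0 Fv Fa qtgt p p' aq0) ∧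
        ∀ aq : QA, aq ≠ aq0 →
          R.outOK S0 Fv Fa qsrc qtgt p p' aq ∧ R.inOK S0 Fv Fa qsrc qtgt p p' aq))


end Rep

end QGr

/-!
A subspace in the Schubert cell with pivot set `S` is the span of a unique reduced echelon family,
one row per pivot. As `q` is a sink touched only by `α₀`, a point of `C_β^M` is a point `W'` of
`C_{β'}^{M'}` together with a subspace `V_q` in the Schubert cell of `β_q` that contains
`M_{α₀}(W'_p)`. Since `M_{α₀}` is an identity matrix, `M_{α₀}(W'_p)` is itself a Schubert subspace,
with pivots `M_{α₀}(β_p) ⊆ β_q`. The rows of `V_q` at the pivots outside `M_{α₀}(β_p)` are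
arbitrary echelon rows, whose free entries give `K^n`; the row at a pivot `M_{α₀}(b)` is then
forced: it is the image of the row of `W'_p` at `b`, reduced by those free rows.
-/

namespace QGr

section Echelon

variable {K ι : Type*} [Field K] [LinearOrder ι]

/-- The paper's row `v_c = c + Σ λ_{i,c} i` (sum over `i < c`, `i ∉ S`) of a Schubert cell. -/
def IsEchelonRow (S : Set ι) (c : ι) (x : ι → K) : Prop :=
  x c = 1 ∧ ∀ i, i ≠ c → ¬(i < c ∧ i ∉ S) → x i = 0

variable (K) in
def schubertCell (S : Set ι) : Set (Submodule K (ι → K)) :=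
  {W | ∃ v : S → ι → K, (∀ s : S, IsEchelonRow S s (v s)) ∧ W = Submodule.span K (Set.range v)}

namespace IsEchelonRow

variable {S : Set ι} {c : ι} {x : ι → K}

theorem apply_of_mem (hx : IsEchelonRow S c x) {i : ι} (hi : i ∈ S) (hic : i ≠ c) : x i = 0 :=
  hx.2 i hic fun h => h.2 hi

theorem apply_of_lt (hx : IsEchelonRow S c x) {i : ι} (hci : c < i) : x i = 0 :=
  hx.2 i hci.ne' fun h => lt_asymm h.1 hci

theorem comp_orderIso {κ : Type*} [LinearOrder κ] {S : Set κ} {c : κ} {x : κ → K}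
    (hx : IsEchelonRow S c x) (e : κ ≃o ι) : IsEchelonRow (e.symm ⁻¹' S) (e c) (x ∘ e.symm) := by
  refine ⟨by simpa using hx.1, fun i hic hi => hx.2 (e.symm i) ?_ ?_⟩
  · rwa [Ne, e.symm_apply_eq]
  · rwa [e.symm_apply_lt]

theorem sub_sum [Fintype ι] {S' : Set ι} (hS : S' ⊆ S) (hc : c ∈ S') (hx : IsEchelonRow S' c x)
    {f : ↥(S \ S') → ι → K} (hf : ∀ d : ↥(S \ S'), IsEchelonRow S d (f d)) :
    IsEchelonRow S c (x - ∑ d : ↥(S \ S'), x d • f d) := by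
  have hfc : ∀ d : ↥(S \ S'), f d c = 0 := fun d =>
    (hf d).apply_of_mem (hS hc) fun h => d.2.2 (h ▸ hc)
  refine ⟨by simp [hx.1, hfc], fun i hic hi => ?_⟩
  simp only [Pi.sub_apply, Finset.sum_apply, Pi.smul_apply, smul_eq_mul]
  by_cases hiS : i ∈ S \ S'
  · rw [Finset.sum_eq_single ⟨i, hiS⟩, (hf _).1, mul_one, sub_self]
    · intro d _ hd
      rw [(hf d).apply_of_mem hiS.1 fun h => hd (Subtype.ext h.symm), mul_zero]
    · simp
  · have hlt : i ∉ S → c < i := fun hiS' =>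
      (lt_or_gt_of_ne hic).resolve_left fun h => hi ⟨h, hiS'⟩
    have hxi : x i = 0 := by
      by_cases hid : i ∈ S
      · exact hx.apply_of_mem (by_contra fun h => hiS ⟨hid, h⟩) hic
      · exact hx.apply_of_lt (hlt hid)
    have hterm : ∀ d : ↥(S \ S'), x d * f d i = 0 := by
      intro d
      by_cases hid : i ∈ S
      · rw [(hf d).apply_of_mem hid fun h => hiS (h ▸ d.2), mul_zero]
      · -- `f d` vanishes at the non-pivot `i` unless `i < d`, and then `c < d` forces `x d = 0`
        by_cases hdi : i < d
        · rw [hx.apply_of_lt ((hlt hid).trans hdi), zero_mul]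
        · rw [(hf d).2 i (fun h => hid (h ▸ d.2.1)) fun h => hdi h.1, mul_zero]
    simp [hterm, hxi]

end IsEchelonRow

theorem map_funLeft_mem_schubertCell {κ : Type*} [LinearOrder κ] (e : κ ≃o ι) {S : Set κ}
    {U : Submodule K (κ → K)} (hU : U ∈ schubertCell K S) :
    U.map (LinearMap.funLeft K K e.symm) ∈ schubertCell K (e.symm ⁻¹' S) := by
  obtain ⟨v, hv, rfl⟩ := hU
  refine ⟨fun t => v ⟨e.symm t, t.2⟩ ∘ e.symm,
    fun t => by simpa using (hv ⟨e.symm t, t.2⟩).comp_orderIso e, ?_⟩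
  rw [Submodule.map_span, ← Set.range_comp]
  congr 1
  ext y
  constructor
  · rintro ⟨s, rfl⟩
    exact ⟨⟨e s, by simp⟩, by simp only [e.symm_apply_apply]; rfl⟩
  · rintro ⟨t, rfl⟩
    exact ⟨⟨e.symm t, t.2⟩, rfl⟩

section Family

variable [Fintype ι] {S : Set ι} {v : S → ι → K}

theorem sum_smul_echelon_apply (hv : ∀ s : S, IsEchelonRow S s (v s)) (a : S → K) (t : S) :
    (∑ s, a s • v s) t = a t := by
  simp only [Finset.sum_apply, Pi.smul_apply, smul_eq_mul]
  rw [Finset.sum_eq_single t, (hv t).1, mul_one]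
  · intro s _ hst
    rw [(hv s).apply_of_mem t.2 fun h => hst (Subtype.ext h).symm, mul_zero]
  · simp

theorem linearIndependent_of_echelon (hv : ∀ s : S, IsEchelonRow S s (v s)) :
    LinearIndependent K v :=
  Fintype.linearIndependent_iff.2 fun a ha t => by
    rw [← sum_smul_echelon_apply hv a t, ha, Pi.zero_apply]

theorem eq_sum_of_mem_span_echelon (hv : ∀ s : S, IsEchelonRow S s (v s)) {x : ι → K}
    (hx : x ∈ Submodule.span K (Set.range v)) : x = ∑ s : S, x s • v s := by
  obtain ⟨a, rfl⟩ := (Submodule.mem_span_range_iff_exists_fun K).1 hx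
  simp_rw [sum_smul_echelon_apply hv]

theorem eq_of_isEchelonRow_mem_span (hv : ∀ s : S, IsEchelonRow S s (v s)) {c : ι} (hc : c ∈ S)
    {y : ι → K} (hy : IsEchelonRow S c y) (hmem : y ∈ Submodule.span K (Set.range v)) :
    y = v ⟨c, hc⟩ := by
  rw [eq_sum_of_mem_span_echelon hv hmem, Finset.sum_eq_single ⟨c, hc⟩, hy.1, one_smul]
  · intro s _ hs
    rw [hy.apply_of_mem s.2 fun h => hs (Subtype.ext h), zero_smul]
  · simp

theorem echelon_eq_of_span_eq {w : S → ι → K} (hv : ∀ s : S, IsEchelonRow S s (v s))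
    (hw : ∀ s : S, IsEchelonRow S s (w s))
    (h : Submodule.span K (Set.range v) = Submodule.span K (Set.range w)) : v = w :=
  funext fun s => eq_of_isEchelonRow_mem_span hw s.2 (hv s) (h ▸ Submodule.subset_span ⟨s, rfl⟩)

theorem finrank_of_mem_schubertCell {W : Submodule K (ι → K)} (hW : W ∈ schubertCell K S) :
    Module.finrank K W = Fintype.card S := by
  obtain ⟨v, hv, rfl⟩ := hW
  exact finrank_span_eq_card (linearIndependent_of_echelon hv)

end Family

end Echelon

section Parametrization

variable {K ι : Type*} [Field K] [LinearOrder ι] {S' S : Set ι}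

variable (S' S) in
/-- The free entries of the echelon rows at the pivots of `S \ S'`. -/
abbrev SchubertParams : Type _ := Σ d : ↥(S \ S'), {i : ι // i < d ∧ i ∉ S}

def freeRow (a : SchubertParams S' S → K) (d : ↥(S \ S')) : ι → K := fun i =>
  if i = d then 1 else if h : i < d ∧ i ∉ S then a ⟨d, i, h⟩ else 0

def freeEntries (w : S → ι → K) : SchubertParams S' S → K := fun p => w ⟨p.1, p.1.2.1⟩ p.2

theorem isEchelonRow_freeRow (a : SchubertParams S' S → K) (d : ↥(S \ S')) :
    IsEchelonRow S d (freeRow a d) :=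
  ⟨if_pos rfl, fun i hid hi => by simp [freeRow, hid, hi]⟩

theorem freeRow_freeEntries {w : S → ι → K} (hw : ∀ s : S, IsEchelonRow S s (w s))
    (d : ↥(S \ S')) : freeRow (freeEntries w) d = w ⟨d, d.2.1⟩ := by
  funext i
  by_cases hid : i = d
  · subst hid
    simp [freeRow, (hw _).1]
  by_cases hi : i < d ∧ i ∉ S
  · simp [freeRow, hid, hi, freeEntries]
  · simp [freeRow, hid, hi, (hw ⟨d, d.2.1⟩).2 i hid hi]

variable [Fintype ι]

def completedRows (u : S' → ι → K) (a : SchubertParams S' S → K) : S → ι → K := fun s =>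
  if hs : (s : ι) ∈ S' then u ⟨s, hs⟩ - ∑ d : ↥(S \ S'), u ⟨s, hs⟩ d • freeRow a d
  else freeRow a ⟨s, s.2, hs⟩

theorem completedRows_of_not_mem (u : S' → ι → K) (a : SchubertParams S' S → K) {s : S}
    (hs : (s : ι) ∉ S') : completedRows u a s = freeRow a ⟨s, s.2, hs⟩ :=
  dif_neg hs

theorem isEchelonRow_completedRows (hS : S' ⊆ S) {u : S' → ι → K}
    (hu : ∀ s : S', IsEchelonRow S' s (u s)) (a : SchubertParams S' S → K) (s : S) :
    IsEchelonRow S s (completedRows u a s) := by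
  by_cases hs : (s : ι) ∈ S'
  · rw [completedRows, dif_pos hs]
    exact (hu ⟨s, hs⟩).sub_sum hS hs (isEchelonRow_freeRow a)
  · rw [completedRows_of_not_mem u a hs]
    exact isEchelonRow_freeRow a _

theorem freeEntries_completedRows (u : S' → ι → K) (a : SchubertParams S' S → K) :
    freeEntries (completedRows u a) = a := by
  funext p
  rw [freeEntries, completedRows_of_not_mem u a p.1.2.2]
  simp [freeRow, p.2.2.1.ne, p.2.2]

theorem span_le_span_completedRows (hS : S' ⊆ S) (u : S' → ι → K) (a : SchubertParams S' S → K) :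
    Submodule.span K (Set.range u) ≤ Submodule.span K (Set.range (completedRows u a)) := by
  rw [Submodule.span_le]
  rintro _ ⟨s, rfl⟩
  have hfree : ∀ d : ↥(S \ S'), freeRow a d = completedRows u a ⟨d, d.2.1⟩ := fun d =>
    (completedRows_of_not_mem u a (s := ⟨d, d.2.1⟩) d.2.2).symm
  have hs : u s = completedRows u a ⟨s, hS s.2⟩ + ∑ d : ↥(S \ S'), u s d • freeRow a d := by
    rw [completedRows, dif_pos s.2, sub_add_cancel]
  rw [SetLike.mem_coe, hs]
  refine Submodule.add_mem _ (Submodule.subset_span ⟨_, rfl⟩) (Submodule.sum_mem _ fun d _ => ?_)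
  rw [hfree]
  exact Submodule.smul_mem _ _ (Submodule.subset_span ⟨_, rfl⟩)

theorem completedRows_freeEntries (hS : S' ⊆ S) {u : S' → ι → K}
    (hu : ∀ s : S', IsEchelonRow S' s (u s)) {w : S → ι → K} (hw : ∀ s : S, IsEchelonRow S s (w s))
    (hle : Submodule.span K (Set.range u) ≤ Submodule.span K (Set.range w)) :
    completedRows u (freeEntries w) = w := by
  funext s
  by_cases hs : (s : ι) ∈ S'
  · refine eq_of_isEchelonRow_mem_span hw s.2 (isEchelonRow_completedRows hS hu _ s) ?_
    rw [completedRows, dif_pos hs]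
    refine Submodule.sub_mem _ (hle (Submodule.subset_span ⟨_, rfl⟩))
      (Submodule.sum_mem _ fun d _ => ?_)
    rw [freeRow_freeEntries hw]
    exact Submodule.smul_mem _ _ (Submodule.subset_span ⟨_, rfl⟩)
  · rw [completedRows_of_not_mem _ _ hs, freeRow_freeEntries hw]

theorem nonempty_equiv_schubertCell_ge (hS : S' ⊆ S) {U : Submodule K (ι → K)}
    (hU : U ∈ schubertCell K S') :
    Nonempty ({W // W ∈ schubertCell K S ∧ U ≤ W} ≃ (SchubertParams S' S → K)) := by
  obtain ⟨u, hu, rfl⟩ := hU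
  let G (a : SchubertParams S' S → K) :
      {W // W ∈ schubertCell K S ∧ Submodule.span K (Set.range u) ≤ W} :=
    ⟨_, ⟨_, isEchelonRow_completedRows hS hu a, rfl⟩, span_le_span_completedRows hS u a⟩
  refine ⟨(Equiv.ofBijective G ⟨fun a b hab => ?_, fun W => ?_⟩).symm⟩
  · rw [← freeEntries_completedRows u a, ← freeEntries_completedRows u b,
      echelon_eq_of_span_eq (isEchelonRow_completedRows hS hu a)
        (isEchelonRow_completedRows hS hu b) (congrArg Subtype.val hab)]
  · obtain ⟨_, ⟨w, hw, rfl⟩, hle⟩ := W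
    exact ⟨freeEntries w, Subtype.ext (by simp only [G, completedRows_freeEntries hS hu hw hle])⟩

end Parametrization

namespace Rep

variable {K V0 A B : Type} [Field K]

section Pivots

def pivots (R : Rep K V0 A B) (β : Finset B) (r : V0) : Set {b : B // R.vtx b = r} :=
  {i | i.val ∈ β}

theorem card_pivots [Fintype B] (R : Rep K V0 A B) (β : Finset B) (r : V0) :
    Fintype.card (R.pivots β r) = (β.filter fun b => R.vtx b = r).card := by
  rw [← Fintype.card_coe (β.filter _)]
  exact Fintype.card_congr
    { toFun := fun i => ⟨i.1.1, Finset.mem_filter.2 ⟨i.2, i.1.2⟩⟩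
      invFun := fun b => ⟨⟨b.1, (Finset.mem_filter.1 b.2).2⟩, (Finset.mem_filter.1 b.2).1⟩
      left_inv := fun _ => rfl
      right_inv := fun _ => rfl }

theorem pivots_filter_ne (R : Rep K V0 A B) (β : Finset B) {q r : V0} (hr : r ≠ q) :
    R.pivots (β.filter fun b => R.vtx b ≠ q) r = R.pivots β r := by
  ext i
  simp [pivots, i.2, hr]

variable [LinearOrder B]

theorem exists_echelon_iff_mem_schubertCell (R : Rep K V0 A B) (β : Finset B) (r : V0)
    (Wr : Submodule K ({b : B // R.vtx b = r} → K)) :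
    (∃ v : {b : B // b ∈ β ∧ R.vtx b = r} → ({b : B // R.vtx b = r} → K),
      (∀ b0, v b0 ⟨b0.val, b0.prop.2⟩ = 1) ∧
      (∀ b0 b1, b1.val ≠ b0.val → ¬(b1.val < b0.val ∧ b1.val ∉ β) → v b0 b1 = 0) ∧
      Wr = Submodule.span K (Set.range v)) ↔ Wr ∈ schubertCell K (R.pivots β r) := by
  let φ : {b : B // b ∈ β ∧ R.vtx b = r} ≃ R.pivots β r :=
    { toFun := fun b => ⟨⟨b.1, b.2.2⟩, b.2.1⟩
      invFun := fun i => ⟨i.1.1, i.2, i.1.2⟩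
      left_inv := fun _ => rfl
      right_inv := fun _ => rfl }
  constructor
  · rintro ⟨v, h1, h0, rfl⟩
    refine ⟨v ∘ φ.symm,
      fun s => ⟨h1 _, fun i hi hlt => h0 _ i (fun h => hi (Subtype.ext h)) hlt⟩, ?_⟩
    rw [EquivLike.range_comp]
  · rintro ⟨w, hw, rfl⟩
    refine ⟨w ∘ φ, fun b => (hw _).1,
      fun b i hi hlt => (hw _).2 i (fun h => hi (congrArg Subtype.val h)) hlt, ?_⟩
    rw [EquivLike.range_comp]

variable [Fintype B]

theorem mem_cell_iff (R : Rep K V0 A B) (β : Finset B) (W : R.SubRep) :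
    W ∈ R.Cell β ↔ R.IsSubrep W ∧ ∀ r, W r ∈ schubertCell K (R.pivots β r) := by
  simp only [Cell, InCell, exists_echelon_iff_mem_schubertCell]
  exact ⟨fun h => ⟨h.1, h.2.2⟩, fun h => ⟨h.1, fun r =>
    (finrank_of_mem_schubertCell (h.2 r)).trans (R.card_pivots β r), h.2⟩⟩

theorem mem_cellOn_iff (R : Rep K V0 A B) (S0 : Set V0) (S1 : Set A) (β : Finset B)
    (W : R.SubRepOn S0) :
    W ∈ R.CellOn S0 S1 β ↔
      R.IsSubrepOn S0 S1 W ∧ ∀ r : {p // p ∈ S0}, W r ∈ schubertCell K (R.pivots β r) := by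
  simp only [CellOn, InCellOn, exists_echelon_iff_mem_schubertCell]
  exact ⟨fun h => ⟨h.1, h.2.2⟩, fun h => ⟨h.1, fun r =>
    (finrank_of_mem_schubertCell (h.2 r)).trans (R.card_pivots β r), h.2⟩⟩

end Pivots

section Sink

variable (R : Rep K V0 A B) {α0 : A}

theorem isSubrep_iff_of_sink
    (hend : ∀ a : A, a ≠ α0 → R.src a ≠ R.tgt α0 ∧ R.tgt a ≠ R.tgt α0) (W : R.SubRep) :
    R.IsSubrep W ↔
      R.IsSubrepOn {r | r ≠ R.tgt α0} {a | a ≠ α0} (R.resOn {r | r ≠ R.tgt α0} W) ∧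
        ∀ x ∈ W (R.src α0), R.mmap α0 x ∈ W (R.tgt α0) := by
  refine ⟨fun h => ⟨fun a _ _ _ => h a, h α0⟩, fun h a => ?_⟩
  by_cases ha : a = α0
  · subst ha
    exact h.2
  · exact h.1 a ha (hend a ha).1 (hend a ha).2

variable [LinearOrder B] {e : {b : B // R.vtx b = R.src α0} ≃o {b : B // R.vtx b = R.tgt α0}}

theorem mmap_eq_funLeft [Finite B] (hlin : R.Linear)
    (he : ∀ i, R.mmap α0 (Pi.single i 1) = Pi.single (e i) 1) :
    R.mmap α0 = LinearMap.funLeft K K e.symm := by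
  suffices h : IsLinearMap.mk' _ (hlin α0) = LinearMap.funLeft K K e.symm from
    congrArg DFunLike.coe h
  refine LinearMap.pi_ext' fun i => LinearMap.ext_ring ?_
  funext c
  simp [he, Pi.single_apply, e.symm_apply_eq]

theorem mapsBasisTo_iff (he : ∀ i, R.mmap α0 (Pi.single i 1) = Pi.single (e i) 1) {b0 b1 : B}
    (h0 : R.vtx b0 = R.src α0) (h1 : R.vtx b1 = R.tgt α0) :
    R.MapsBasisTo α0 b0 b1 ↔ e ⟨b0, h0⟩ = ⟨b1, h1⟩ := by
  constructor
  · rintro ⟨_, _, h⟩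
    have h' : (Pi.single (e ⟨b0, h0⟩) 1 : _ → K) = Pi.single ⟨b1, h1⟩ 1 := by
      rw [← he]
      convert h
    by_contra hne
    simpa [hne] using congrFun h' (e ⟨b0, h0⟩)
  · intro h
    refine ⟨h0, h1, ?_⟩
    rw [← h]
    convert he ⟨b0, h0⟩

theorem exists_mapsBasisTo_iff (he : ∀ i, R.mmap α0 (Pi.single i 1) = Pi.single (e i) 1)
    (β : Finset B) {b1 : B} (h1 : R.vtx b1 = R.tgt α0) :
    (∃ b0 ∈ β, R.MapsBasisTo α0 b0 b1) ↔ (e.symm ⟨b1, h1⟩).val ∈ β := by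
  constructor
  · rintro ⟨b0, hb0, hm⟩
    obtain ⟨h0, -, -⟩ := id hm
    rw [R.mapsBasisTo_iff he h0 h1] at hm
    rwa [← hm, e.symm_apply_apply]
  · intro h
    exact ⟨_, h, (R.mapsBasisTo_iff he (e.symm _).2 h1).2 (e.apply_symm_apply _)⟩

theorem preimage_pivots_subset (he : ∀ i, R.mmap α0 (Pi.single i 1) = Pi.single (e i) 1)
    {β : Finset B} (himg : ∀ b0 ∈ β, R.vtx b0 = R.src α0 → ∃ b1 ∈ β, R.MapsBasisTo α0 b0 b1) :
    e.symm ⁻¹' R.pivots β (R.src α0) ⊆ R.pivots β (R.tgt α0) := by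
  intro i hi
  obtain ⟨b1, hb1, hm⟩ := himg _ hi (e.symm i).2
  obtain ⟨-, h1, -⟩ := id hm
  rw [R.mapsBasisTo_iff he (e.symm i).2 h1, Subtype.coe_eta, e.apply_symm_apply] at hm
  show i.val ∈ β
  rwa [hm]

variable [Fintype B]

theorem card_schubertParams
    (he : ∀ i, R.mmap α0 (Pi.single i 1) = Pi.single (e i) 1) (β : Finset B) :
    Fintype.card (SchubertParams (e.symm ⁻¹' R.pivots β (R.src α0)) (R.pivots β (R.tgt α0))) =
      ∑ b ∈ β.filter (fun b => R.vtx b = R.tgt α0 ∧ ¬ ∃ b0 ∈ β, R.MapsBasisTo α0 b0 b),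
        (Finset.univ.filter (fun b' : B => R.vtx b' = R.tgt α0 ∧ b' < b ∧ b' ∉ β)).card := by
  let F := β.filter (fun b => R.vtx b = R.tgt α0 ∧ ¬ ∃ b0 ∈ β, R.MapsBasisTo α0 b0 b)
  let φ : ↥(R.pivots β (R.tgt α0) \ e.symm ⁻¹' R.pivots β (R.src α0)) ≃ F :=
    { toFun := fun d => ⟨d.1.1, Finset.mem_filter.2
        ⟨d.2.1, d.1.2, (R.exists_mapsBasisTo_iff he β d.1.2).not.2 d.2.2⟩⟩
      invFun := fun b => ⟨⟨b.1, (Finset.mem_filter.1 b.2).2.1⟩, (Finset.mem_filter.1 b.2).1,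
        (R.exists_mapsBasisTo_iff he β _).not.1 (Finset.mem_filter.1 b.2).2.2⟩
      left_inv := fun _ => rfl
      right_inv := fun _ => rfl }
  rw [Fintype.card_sigma, ← Finset.sum_coe_sort F]
  refine Fintype.sum_equiv φ _ _ fun d => ?_
  refine (Fintype.card_congr ?_).trans (Fintype.card_coe _)
  exact
    { toFun := fun i => ⟨i.1.1, Finset.mem_filter.2 ⟨Finset.mem_univ _, i.1.2, i.2.1, i.2.2⟩⟩
      invFun := fun b => ⟨⟨b.1, (Finset.mem_filter.1 b.2).2.1⟩, (Finset.mem_filter.1 b.2).2.2⟩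
      left_inv := fun _ => rfl
      right_inv := fun _ => rfl }

theorem mem_cell_iff_of_sink (hlin : R.Linear)
    (he : ∀ i, R.mmap α0 (Pi.single i 1) = Pi.single (e i) 1)
    (hend : ∀ a : A, a ≠ α0 → R.src a ≠ R.tgt α0 ∧ R.tgt a ≠ R.tgt α0) (β : Finset B)
    (W : R.SubRep) :
    W ∈ R.Cell β ↔
      R.resOn {r | r ≠ R.tgt α0} W ∈
          R.CellOn {r | r ≠ R.tgt α0} {a | a ≠ α0} (β.filter fun b => R.vtx b ≠ R.tgt α0) ∧
        W (R.tgt α0) ∈ schubertCell K (R.pivots β (R.tgt α0)) ∧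
        (W (R.src α0)).map (LinearMap.funLeft K K e.symm) ≤ W (R.tgt α0) := by
  rw [mem_cell_iff, mem_cellOn_iff, R.isSubrep_iff_of_sink hend, R.mmap_eq_funLeft hlin he,
    Submodule.map_le_iff_le_comap]
  constructor
  · rintro ⟨⟨hsub, hmap⟩, hcell⟩
    exact ⟨⟨hsub, fun r => (R.pivots_filter_ne β r.2).symm ▸ hcell r⟩, hcell _, hmap⟩
  · rintro ⟨⟨hsub, hcell⟩, hq, hmap⟩
    refine ⟨⟨hsub, hmap⟩, fun r => ?_⟩
    by_cases hr : r = R.tgt α0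
    · exact hr ▸ hq
    · exact R.pivots_filter_ne β hr ▸ hcell ⟨r, hr⟩

def cellEquivSigma (hlin : R.Linear) (hloop : R.src α0 ≠ R.tgt α0)
    (hend : ∀ a : A, a ≠ α0 → R.src a ≠ R.tgt α0 ∧ R.tgt a ≠ R.tgt α0)
    (he : ∀ i, R.mmap α0 (Pi.single i 1) = Pi.single (e i) 1) (β : Finset B) :
    R.Cell β ≃ Σ W' : R.CellOn {r | r ≠ R.tgt α0} {a | a ≠ α0}
        (β.filter fun b => R.vtx b ≠ R.tgt α0),
      {Wq // Wq ∈ schubertCell K (R.pivots β (R.tgt α0)) ∧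
        (W'.1 ⟨R.src α0, hloop⟩).map (LinearMap.funLeft K K e.symm) ≤ Wq} where
  toFun W :=
    have hW := (R.mem_cell_iff_of_sink hlin he hend β W).1 W.2
    ⟨⟨_, hW.1⟩, W.1 (R.tgt α0), hW.2⟩
  invFun W :=
    let X : R.SubRep := (Equiv.piSplitAt (R.tgt α0) _).symm (W.2.1, W.1.1)
    have hX : Equiv.piSplitAt (R.tgt α0) _ X = (W.2.1, W.1.1) := Equiv.apply_symm_apply _ _
    have hres : R.resOn {r | r ≠ R.tgt α0} X = W.1.1 := congrArg Prod.snd hX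
    have hq : X (R.tgt α0) = W.2.1 := congrArg Prod.fst hX
    have hp : X (R.src α0) = W.1.1 ⟨R.src α0, hloop⟩ := congrFun hres ⟨R.src α0, hloop⟩
    ⟨X, (R.mem_cell_iff_of_sink hlin he hend β X).2 (by rw [hres, hq, hp]; exact ⟨W.1.2, W.2.2⟩)⟩
  left_inv W := Subtype.ext ((Equiv.piSplitAt (R.tgt α0) _).symm_apply_apply W.1)
  right_inv W := Sigma.subtype_ext
    (Subtype.ext (congrArg Prod.snd ((Equiv.piSplitAt (R.tgt α0) _).apply_symm_apply _)))
    (congrArg Prod.fst ((Equiv.piSplitAt (R.tgt α0) _).apply_symm_apply _))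

end Sink

end Rep

end QGr

open QGr in
theorem schubert_cell_remove_sink_general
    {K V0 A B : Type} [Field K] [Fintype B] [LinearOrder B]
    (R : Rep K V0 A B) (hlin : R.Linear)
    (α0 : A) (hloop : R.src α0 ≠ R.tgt α0)
    (hend : ∀ a : A, a ≠ α0 → R.src a ≠ R.tgt α0 ∧ R.tgt a ≠ R.tgt α0)
    (hid : R.IsIdMat α0)
    (β : Finset B)
    (himg : ∀ b0 ∈ β, R.vtx b0 = R.src α0 → ∃ b1 ∈ β, R.MapsBasisTo α0 b0 b1) :
    ∃ e : ↥(R.Cell β) ≃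
        ↥(R.CellOn {r : V0 | r ≠ R.tgt α0} {a : A | a ≠ α0}
            (β.filter fun b => R.vtx b ≠ R.tgt α0)) ×
        (Fin (∑ b ∈ β.filter
            (fun b => R.vtx b = R.tgt α0 ∧ ¬ ∃ b0 ∈ β, R.MapsBasisTo α0 b0 b),
          (Finset.univ.filter
            (fun b' : B => R.vtx b' = R.tgt α0 ∧ b' < b ∧ b' ∉ β)).card) → K),
      ∀ W : ↥(R.Cell β),
        ((e W).1 : R.SubRepOn {r : V0 | r ≠ R.tgt α0}) =
          R.resOn {r : V0 | r ≠ R.tgt α0} W.val := by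
  obtain ⟨e, he⟩ := hid
  have hU (W' : R.CellOn {r | r ≠ R.tgt α0} {a | a ≠ α0}
      (β.filter fun b => R.vtx b ≠ R.tgt α0)) :
      (W'.1 ⟨R.src α0, hloop⟩).map (LinearMap.funLeft K K e.symm) ∈
        schubertCell K (e.symm ⁻¹' R.pivots β (R.src α0)) := by
    have hp := ((R.mem_cellOn_iff _ _ _ _).1 W'.2).2 ⟨R.src α0, hloop⟩
    rw [R.pivots_filter_ne β hloop] at hp
    exact map_funLeft_mem_schubertCell e hp
  let fiber W' := (nonempty_equiv_schubertCell_ge (R.preimage_pivots_subset he himg) (hU W')).some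
  let params := Fintype.equivFinOfCardEq (R.card_schubertParams he β)
  exact ⟨(R.cellEquivSigma hlin hloop hend he β).trans <|
    (Equiv.sigmaCongrRight fiber).trans <| (Equiv.sigmaEquivProd _ _).trans <|
      Equiv.prodCongr (Equiv.refl _) (Equiv.arrowCongr params (Equiv.refl K)), fun _ => rfl⟩

open QGr in
/-- Let `α₀ : p → q` be an arrow of `T` such that `q` is incident to no other
arrow, and let `T'` be `T` with `q` and `α₀` removed.  If the ordered basis `B` puts all of
`B_q` at the end of `B` and the matrix of `M_{α₀}` is the identity, and if
`M_{α₀}(β_p) ⊆ β_q`, then `C_β^M ≅ C_{β'}^{M'} × K^n` (first component the restriction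
to `T'`) with `n = Σ_{b ∈ β_q ∖ M_{α₀}(β_p)} #{b' ∈ B_q : b' < b, b' ∉ β_q}`. -/
theorem schubert_cell_remove_sink
    {K V0 A B : Type} [Field K] [Fintype V0] [Fintype A] [Fintype B] [LinearOrder B]
    (R : Rep K V0 A B) (hlin : R.Linear)
    (α0 : A) (hloop : R.src α0 ≠ R.tgt α0)
    (hend : ∀ a : A, a ≠ α0 → R.src a ≠ R.tgt α0 ∧ R.tgt a ≠ R.tgt α0)
    (hord : ∀ b b' : B, R.vtx b ≠ R.tgt α0 → R.vtx b' = R.tgt α0 → b < b')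
    (hid : R.IsIdMat α0)
    (β : Finset B)
    (himg : ∀ b0 ∈ β, R.vtx b0 = R.src α0 → ∃ b1 ∈ β, R.MapsBasisTo α0 b0 b1) :
    ∃ e : ↥(R.Cell β) ≃
        ↥(R.CellOn {r : V0 | r ≠ R.tgt α0} {a : A | a ≠ α0}
            (β.filter fun b => R.vtx b ≠ R.tgt α0)) ×
        (Fin (∑ b ∈ β.filter
            (fun b => R.vtx b = R.tgt α0 ∧ ¬ ∃ b0 ∈ β, R.MapsBasisTo α0 b0 b),
          (Finset.univ.filter
            (fun b' : B => R.vtx b' = R.tgt α0 ∧ b' < b ∧ b' ∉ β)).card) → K),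
      ∀ W : ↥(R.Cell β),
        ((e W).1 : R.SubRepOn {r : V0 | r ≠ R.tgt α0}) =
          R.resOn {r : V0 | r ≠ R.tgt α0} W.val :=
  schubert_cell_remove_sink_general R hlin α0 hloop hend hid β himg
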